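/- Let A, K, S, z be as in the standing setup (S closed semiregular on A, S|_K regular with z-transform z ∈ M(K)). Then A ⊆ closure((1 - z*z)·A) and A ⊆ closure((1 - zz*)·A). -/

import Mathlib

/-!
Put `w = √(1 - z⋆z)` and `w' = √(1 - zz⋆)`. Approximating `√` by polynomials turns
`z (1 - z⋆z) = (1 - zz⋆) z` into `z w = w' z`. As `K` is essential and `S (w k) = z k` on `K`,
this forces `w' (S b) = z b` for `b ∈ dom S`, so density of `dom S` gives `zA ⊆ cl(w'A)`.
Dually, `b ∈ dom S⋆` means `b⋆ z = c⋆ w` on `K`, i.e. `z⋆ b = w c`, and semiregularity gives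
`z⋆A ⊆ cl(wA)`. Hence `z⋆z A ⊆ cl(z⋆ w' A) = cl(w z⋆ A) ⊆ cl(w² A) = cl((1 - z⋆z) A)`, and
`a = (1 - z⋆z) a + z⋆z a` puts every `a ∈ A` in `cl((1 - z⋆z) A)`; symmetrically for `1 - zz⋆`.
-/

/-- A densely defined operator on a C*-subalgebra `A` of an ambient unital C*-algebra `M`
(playing the role of `M(K)`).  It is presented by a total function `toFun` whose
meaningful values are those on its domain `dom ⊆ A`, which is a dense right ideal of `A`
on which the operator is `ℂ`-linear and right `A`-linear. -/
structure AmbientOp (M : Type*) [CStarAlgebra M] (A : Set M) where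
  dom : Set M
  toFun : M → M
  dom_sub : dom ⊆ A
  maps_to : ∀ a ∈ dom, toFun a ∈ A
  dense_dom : ∀ a ∈ A, a ∈ closure dom
  zero_mem : (0 : M) ∈ dom
  add_mem : ∀ a ∈ dom, ∀ b ∈ dom, a + b ∈ dom
  smul_mem : ∀ (c : ℂ), ∀ a ∈ dom, c • a ∈ dom
  mul_mem : ∀ a ∈ dom, ∀ x ∈ A, a * x ∈ dom
  map_add' : ∀ a ∈ dom, ∀ b ∈ dom, toFun (a + b) = toFun a + toFun b
  map_smul' : ∀ (c : ℂ), ∀ a ∈ dom, toFun (c • a) = c • toFun a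
  map_mul' : ∀ a ∈ dom, ∀ x ∈ A, toFun (a * x) = toFun a * x

namespace AmbientOp

variable {M : Type*} [CStarAlgebra M] {A : Set M}

/-- The domain of the adjoint `S*`, relative to the algebra `A`. -/
def adjDom (S : AmbientOp M A) : Set M :=
  {a : M | a ∈ A ∧ ∃ c ∈ A, ∀ b ∈ S.dom, star a * S.toFun b = star c * b}

/-- `S` is semiregular if its adjoint is densely defined in `A`. -/
def Semiregular (S : AmbientOp M A) : Prop := ∀ a ∈ A, a ∈ closure S.adjDom

/-- `S` is a closed operator if its graph is closed. -/
def IsClosedOp (S : AmbientOp M A) : Prop :=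
  IsClosed {p : M × M | p.1 ∈ S.dom ∧ p.2 = S.toFun p.1}

open Classical in
/-- The value of the adjoint `S*` at `a` (junk value `0` off the adjoint domain). -/
noncomputable def adjFun (S : AmbientOp M A) (a : M) : M :=
  if h : ∃ c ∈ A, ∀ b ∈ S.dom, star a * S.toFun b = star c * b then h.choose else 0

/-- The domain of the double adjoint `S**`, relative to `A`. -/
def adjDom2 (S : AmbientOp M A) : Set M :=
  {a : M | a ∈ A ∧ ∃ c ∈ A, ∀ b ∈ S.adjDom, star a * S.adjFun b = star c * b}

open Classical in
/-- The value of the double adjoint `S**` at `a`. -/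
noncomputable def adjFun2 (S : AmbientOp M A) (a : M) : M :=
  if h : ∃ c ∈ A, ∀ b ∈ S.adjDom, star a * S.adjFun b = star c * b then h.choose else 0

end AmbientOp

open scoped Pointwise

theorem SemiconjBy.aeval {R B : Type*} [CommSemiring R] [Semiring B] [Algebra R B] {x a b : B}
    (h : SemiconjBy x a b) (P : Polynomial R) :
    SemiconjBy x (Polynomial.aeval a P) (Polynomial.aeval b P) := by
  induction P using Polynomial.induction_on' with
  | add f g hf hg => simpa only [map_add] using hf.add_right hg
  | monomial n c => simpa only [Polynomial.aeval_monomial, ← Algebra.smul_def]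
      using (h.pow_right n).smul_right c

section FunctionalCalculus

variable {M : Type*} [CStarAlgebra M]

theorem SemiconjBy.cfc_real {x a b : M} (ha : IsSelfAdjoint a) (hb : IsSelfAdjoint b)
    (h : SemiconjBy x a b) {f : ℝ → ℝ} (hf : Continuous f) :
    SemiconjBy x (cfc f a) (cfc f b) := by
  rw [SemiconjBy]
  nontriviality M
  refine eq_of_forall_dist_le fun ε hε ↦ ?_
  rw [dist_eq_norm]
  set R := max ‖a‖ ‖b‖
  -- Approximate `f` uniformly on `[-R, R] ⊇ σ(a) ∪ σ(b)` by a polynomial `P`, for which the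
  -- intertwining is algebraic.
  obtain ⟨P, hP⟩ := exists_polynomial_near_of_continuousOn (-R) R f hf.continuousOn
    (ε / (2 * ‖x‖ + 1)) (by positivity)
  have hnear {c : M} (hc : IsSelfAdjoint c) (hcR : ‖c‖ ≤ R) :
      ‖cfc f c - Polynomial.aeval c P‖ ≤ ε / (2 * ‖x‖ + 1) := by
    rw [← cfc_polynomial P c, ← cfc_sub f _ c hf.continuousOn P.continuous.continuousOn]
    refine norm_cfc_le (by positivity) fun t ht ↦ ?_
    have htR : |t| ≤ R := (spectrum.norm_le_norm_of_mem ht).trans hcR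
    rw [Real.norm_eq_abs, abs_sub_comm]
    exact (hP t (abs_le.mp htR)).le
  have hεa := hnear ha (le_max_left _ _)
  have hεb := hnear hb (le_max_right _ _)
  have hdecomp : x * cfc f a - cfc f b * x =
      x * (cfc f a - Polynomial.aeval a P) - (cfc f b - Polynomial.aeval b P) * x := by
    rw [mul_sub, sub_mul, (h.aeval P).eq]; abel
  calc ‖x * cfc f a - cfc f b * x‖
      ≤ ‖x‖ * ‖cfc f a - Polynomial.aeval a P‖ + ‖cfc f b - Polynomial.aeval b P‖ * ‖x‖ := by
        rw [hdecomp]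
        exact (norm_sub_le _ _).trans (add_le_add (norm_mul_le _ _) (norm_mul_le _ _))
    _ ≤ 2 * ‖x‖ * (ε / (2 * ‖x‖ + 1)) := by nlinarith [norm_nonneg x]
    _ ≤ ε := by
        rw [mul_div_assoc', div_le_iff₀ (by positivity)]
        nlinarith [norm_nonneg x]

variable [PartialOrder M] [StarOrderedRing M]

theorem one_sub_star_mul_self_nonneg {z : M} (hz : ‖z‖ ≤ 1) : 0 ≤ 1 - star z * z := by
  rw [sub_nonneg]
  refine (CStarAlgebra.mem_Icc_iff_norm_le_one.mpr ⟨star_mul_self_nonneg z, ?_⟩).2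
  rw [CStarRing.norm_star_mul_self]
  exact mul_le_one₀ hz (norm_nonneg z) hz

theorem one_sub_mul_star_self_nonneg {z : M} (hz : ‖z‖ ≤ 1) : 0 ≤ 1 - z * star z := by
  simpa using one_sub_star_mul_self_nonneg (z := star z) (by simpa using hz)

theorem semiconjBy_sqrt_one_sub {z : M} (hz : ‖z‖ ≤ 1) :
    SemiconjBy z (CFC.sqrt (1 - star z * z)) (CFC.sqrt (1 - z * star z)) := by
  have hp := one_sub_star_mul_self_nonneg hz
  have hq := one_sub_mul_star_self_nonneg hz
  rw [CFC.sqrt_eq_real_sqrt _ hp, CFC.sqrt_eq_real_sqrt _ hq, cfcₙ_eq_cfc, cfcₙ_eq_cfc]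
  refine SemiconjBy.cfc_real (.of_nonneg hp) (.of_nonneg hq) ?_ Real.continuous_sqrt
  simp only [SemiconjBy, mul_sub, sub_mul, mul_one, one_mul, mul_assoc]

end FunctionalCalculus

section Closure

variable {M : Type*} [CStarAlgebra M]

theorem smul_subset_closure_smul_of_subset {c : M} {s t : Set M} (h : s ⊆ closure t) :
    c • s ⊆ closure (c • t) :=
  (Set.smul_set_mono h).trans (smul_closure_subset c t)

theorem mul_smul_subset_closure_mul_smul {x y u v : M} {A : Set M}
    (hx : x • A ⊆ closure (u • A)) (hy : y • A ⊆ closure (v • A)) (hyu : SemiconjBy y u v) :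
    (y * x) • A ⊆ closure ((v * v) • A) :=
  calc (y * x) • A = y • x • A := mul_smul y x A
    _ ⊆ closure (y • u • A) := smul_subset_closure_smul_of_subset hx
    _ = closure (v • y • A) := by rw [← mul_smul, hyu.eq, mul_smul]
    _ ⊆ closure (closure (v • v • A)) := closure_mono (smul_subset_closure_smul_of_subset hy)
    _ = closure ((v * v) • A) := by rw [closure_closure, mul_smul]

theorem subset_closure_smul_of_one_sub_smul_subset {S : Type*} [SetLike S M] [AddMemClass S M]
    {A : S} {p : M} (h : (1 - p) • (A : Set M) ⊆ closure (p • (A : Set M))) :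
    (A : Set M) ⊆ closure (p • (A : Set M)) := by
  intro a ha
  have hshift : Set.MapsTo (p * a + ·) (p • (A : Set M)) (p • (A : Set M)) := by
    rintro _ ⟨b, hb, rfl⟩
    exact ⟨a + b, add_mem ha hb, by simp [mul_add]⟩
  simpa [sub_mul] using map_mem_closure (continuous_const_add _) (h ⟨a, ha, rfl⟩) hshift

end Closure

namespace AmbientOp

variable {M : Type*} [CStarAlgebra M] {A : Set M} (S : AmbientOp M A) {K : TwoSidedIdeal M}
  {z w w' : M}

theorem mul_toFun_eq (hKA : (K : Set M) ⊆ A) (hKess : ∀ m : M, (∀ k ∈ K, m * k = 0) → m = 0)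
    (hdom : S.dom ∩ K ⊆ (w * ·) '' K) (hact : ∀ k ∈ K, S.toFun (w * k) = z * k)
    (hzw : SemiconjBy z w w') {b : M} (hb : b ∈ S.dom) :
    w' * S.toFun b = z * b := by
  refine sub_eq_zero.mp (hKess _ fun k hk ↦ ?_)
  obtain ⟨k', hk', hbk⟩ := hdom ⟨S.mul_mem b hb k (hKA hk), K.mul_mem_left b k hk⟩
  have hSbk : S.toFun b * k = z * k' := by
    rw [← S.map_mul' b hb k (hKA hk), ← hbk, hact k' hk']
  calc (w' * S.toFun b - z * b) * k = w' * (S.toFun b * k) - z * (b * k) := by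
        rw [sub_mul, mul_assoc, mul_assoc]
    _ = 0 := by rw [hSbk, ← hbk, ← mul_assoc, ← mul_assoc, hzw.eq, sub_self]

theorem smul_subset_closure_smul (hKA : (K : Set M) ⊆ A)
    (hKess : ∀ m : M, (∀ k ∈ K, m * k = 0) → m = 0)
    (hdom : S.dom ∩ K ⊆ (w * ·) '' K) (hact : ∀ k ∈ K, S.toFun (w * k) = z * k)
    (hzw : SemiconjBy z w w') :
    z • A ⊆ closure (w' • A) := by
  refine (smul_subset_closure_smul_of_subset S.dense_dom).trans (closure_mono ?_)
  rintro _ ⟨b, hb, rfl⟩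
  exact ⟨S.toFun b, S.maps_to b hb, S.mul_toFun_eq hKA hKess hdom hact hzw hb⟩

theorem star_mul_eq_mul_of_mem_adjDom (hKess : ∀ m : M, (∀ k ∈ K, m * k = 0) → m = 0)
    (hdom : ∀ k ∈ K, w * k ∈ S.dom) (hact : ∀ k ∈ K, S.toFun (w * k) = z * k)
    (hw : IsSelfAdjoint w) {b : M} (hb : b ∈ S.adjDom) :
    ∃ c ∈ A, star z * b = w * c := by
  obtain ⟨-, c, hc, hbc⟩ := hb
  have hker : star b * z = star c * w := by
    refine sub_eq_zero.mp (hKess _ fun k hk ↦ ?_)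
    rw [sub_mul, mul_assoc, mul_assoc, ← hact k hk, hbc _ (hdom k hk), sub_self]
  refine ⟨c, hc, ?_⟩
  simpa [hw.star_eq] using congrArg star hker

theorem star_smul_subset_closure_smul (hS : S.Semiregular)
    (hKess : ∀ m : M, (∀ k ∈ K, m * k = 0) → m = 0)
    (hdom : ∀ k ∈ K, w * k ∈ S.dom) (hact : ∀ k ∈ K, S.toFun (w * k) = z * k)
    (hw : IsSelfAdjoint w) :
    star z • A ⊆ closure (w • A) := by
  refine (smul_subset_closure_smul_of_subset hS).trans (closure_mono ?_)
  rintro _ ⟨b, hb, rfl⟩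
  obtain ⟨c, hc, hbc⟩ := S.star_mul_eq_mul_of_mem_adjDom hKess hdom hact hw hb
  exact ⟨c, hc, hbc.symm⟩

end AmbientOp

theorem stmt_14_general
    {M : Type*} [CStarAlgebra M] [PartialOrder M] [StarOrderedRing M]
    (A : NonUnitalStarSubalgebra ℂ M)
    (K : TwoSidedIdeal M)
    (hKA : (K : Set M) ⊆ (A : Set M))
    (hKess : ∀ m : M, (∀ k ∈ K, m * k = 0) → m = 0)
    (S : AmbientOp M (A : Set M)) (hS : S.Semiregular)
    (z : M) (hz : ‖z‖ ≤ 1)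
    (hzdom : S.dom ∩ (K : Set M) = (fun x => CFC.sqrt (1 - star z * z) * x) '' K)
    (hzact : ∀ k ∈ K, S.toFun (CFC.sqrt (1 - star z * z) * k) = z * k) :
    ∀ a ∈ A, a ∈ closure ((fun x => (1 - star z * z) * x) '' A) ∧
      a ∈ closure ((fun x => (1 - z * star z) * x) '' A) := by
  set w := CFC.sqrt (1 - star z * z)
  set w' := CFC.sqrt (1 - z * star z)
  have hw : IsSelfAdjoint w := .of_nonneg (CFC.sqrt_nonneg _)
  have hw' : IsSelfAdjoint w' := .of_nonneg (CFC.sqrt_nonneg _)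
  have hzw : SemiconjBy z w w' := semiconjBy_sqrt_one_sub hz
  have hzw' : SemiconjBy (star z) w' w := by
    simpa [SemiconjBy, hw.star_eq, hw'.star_eq] using (congrArg star hzw).symm
  have hzA : z • (A : Set M) ⊆ closure (w' • (A : Set M)) :=
    S.smul_subset_closure_smul hKA hKess hzdom.subset hzact hzw
  have hzsA : star z • (A : Set M) ⊆ closure (w • (A : Set M)) :=
    S.star_smul_subset_closure_smul hS hKess (fun k hk ↦ (hzdom.superset ⟨k, hk, rfl⟩).1)
      hzact hw
  have hw2 : w * w = 1 - star z * z := CFC.sqrt_mul_sqrt_self _ (one_sub_star_mul_self_nonneg hz)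
  have hw'2 : w' * w' = 1 - z * star z := CFC.sqrt_mul_sqrt_self _ (one_sub_mul_star_self_nonneg hz)
  intro a ha
  simp only [← smul_eq_mul, Set.image_smul]
  refine ⟨subset_closure_smul_of_one_sub_smul_subset ?_ ha,
    subset_closure_smul_of_one_sub_smul_subset ?_ ha⟩
  · simpa [hw2] using mul_smul_subset_closure_mul_smul hzA hzsA hzw'
  · simpa [hw'2] using mul_smul_subset_closure_mul_smul hzsA hzA hzw

/-- In the standing setup (`S` closed semiregular on `A`, `S|_K` regular with z-transform
`z`), one has `A ⊆ closure((1 - z*z)·A)` and `A ⊆ closure((1 - zz*)·A)`. -/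
theorem stmt_14
    {M : Type*} [CStarAlgebra M] [PartialOrder M] [StarOrderedRing M]
    (A : NonUnitalStarSubalgebra ℂ M) (hAc : IsClosed (A : Set M))
    (K : TwoSidedIdeal M) (hKc : IsClosed (K : Set M))
    (hKstar : ∀ k ∈ K, star k ∈ K)
    (hKA : (K : Set M) ⊆ (A : Set M))
    (hKess : ∀ m : M, (∀ k ∈ K, m * k = 0) → m = 0)
    (S : AmbientOp M (A : Set M)) (hS : S.Semiregular) (hSc : S.IsClosedOp)
    (z : M) (hz : ‖z‖ ≤ 1)
    (hzdense : ∀ k ∈ K, k ∈ closure ((fun x => CFC.sqrt (1 - star z * z) * x) '' K))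
    (hzdom : S.dom ∩ (K : Set M) = (fun x => CFC.sqrt (1 - star z * z) * x) '' K)
    (hzact : ∀ k ∈ K, S.toFun (CFC.sqrt (1 - star z * z) * k) = z * k) :
    ∀ a ∈ A, a ∈ closure ((fun x => (1 - star z * z) * x) '' A) ∧
      a ∈ closure ((fun x => (1 - z * star z) * x) '' A) :=
  stmt_14_general A K hKA hKess S hS z hz hzdom hzact
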